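/- arXiv:1802.01134 — 3 statements merged into one kernel-verified Lean document; each statement's English description precedes it below -/
import Mathlib

section
/- For integers a, b, the discriminant of a·(4, 3, −7/8) + b·(−8, 0, 7/4) equals 9a² + 7(a − 2b)²; in particular it is at least 7 (indeed at least 16) whenever (a, b) ≠ (0, 0). -/
/-!
The integers `a` and `a - 2b` have the same parity and are not both zero, so either both are
nonzero (giving `9 + 7`) or one vanishes and the other is a nonzero even number
(giving at least `7 · 4` or `9 · 4`).
-/

lemma Int.one_le_sq_of_ne_zero {x : ℤ} (hx : x ≠ 0) : 1 ≤ x ^ 2 :=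
  (one_le_sq_iff_one_le_abs x).mpr (Int.one_le_abs hx)

lemma Int.four_le_sq_of_even_of_ne_zero {x : ℤ} (hx : Even x) (h0 : x ≠ 0) : 4 ≤ x ^ 2 := by
  obtain ⟨k, rfl⟩ := hx
  have hk : 1 ≤ k ^ 2 := Int.one_le_sq_of_ne_zero (by rintro rfl; simp at h0)
  linarith [show (k + k) ^ 2 = 4 * k ^ 2 by ring]

lemma sixteen_le_nine_mul_sq_add_seven_mul_sq {a b : ℤ} (h : (a, b) ≠ (0, 0)) :
    16 ≤ 9 * a ^ 2 + 7 * (a - 2 * b) ^ 2 := by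
  have hc_even_iff : Even (a - 2 * b) ↔ Even a := by
    simp [Int.even_sub]
  by_cases ha : a = 0
  · subst ha
    have hb : b ≠ 0 := by simpa using h
    have := Int.four_le_sq_of_even_of_ne_zero (hc_even_iff.mpr Even.zero) (by omega)
    linarith
  by_cases hc : a - 2 * b = 0
  · have := Int.four_le_sq_of_even_of_ne_zero (hc_even_iff.mp (hc ▸ Even.zero)) ha
    rw [hc]
    linarith
  · linarith [Int.one_le_sq_of_ne_zero ha, Int.one_le_sq_of_ne_zero hc]

/-- The discriminant Δ(r,c,d) = c² − 2rd of a·(4,3,−7/8) + b·(−8,0,7/4) equals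
    9a² + 7(a − 2b)², and is at least 7 (indeed at least 16) when (a,b) ≠ (0,0). -/
theorem discriminant_A2 (a b : ℤ) :
    ((3 * (a : ℚ)) ^ 2
        - 2 * (4 * (a : ℚ) - 8 * b) * (-(7 / 8) * (a : ℚ) + (7 / 4) * b)
      = 9 * (a : ℚ) ^ 2 + 7 * ((a : ℚ) - 2 * b) ^ 2) ∧
    ((a, b) ≠ (0, 0) →
      7 ≤ 9 * (a : ℚ) ^ 2 + 7 * ((a : ℚ) - 2 * b) ^ 2 ∧
      16 ≤ 9 * (a : ℚ) ^ 2 + 7 * ((a : ℚ) - 2 * b) ^ 2) := by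
  refine ⟨by ring, fun h => ?_⟩
  have h16 : (16 : ℚ) ≤ 9 * (a : ℚ) ^ 2 + 7 * ((a : ℚ) - 2 * b) ^ 2 := by
    exact_mod_cast sixteen_le_nine_mul_sq_add_seven_mul_sq h
  exact ⟨by linarith, h16⟩
end

section
/- Let a ≥ 1 and b, c be integers with 0 ≤ b ≤ 6 and c > 0, and let α > 0 be a real number with α² = c/(16a). If b² ≥ ac and (6 − b)² ≥ ac, then α ≤ 3/4. -/
/-!
Since `min b (6 - b) ≤ 3`, the two discriminant conditions give `a * c ≤ 9`. As `a ≥ 1` this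
forces `c ≤ 9 * a`, hence `α² = c / (16 a) ≤ 9 / 16`.
-/

theorem le_sq_of_le_sq_of_le_sq_sub {R : Type*} [CommRing R] [LinearOrder R] [IsStrictOrderedRing R]
    {x b m : R} (hb0 : 0 ≤ b) (hb : b ≤ 2 * m) (h1 : x ≤ b ^ 2) (h2 : x ≤ (2 * m - b) ^ 2) :
    x ≤ m ^ 2 := by
  rcases le_total b m with h | h
  · nlinarith
  · nlinarith

theorem div_le_of_one_le_of_mul_le {K : Type*} [Field K] [LinearOrder K] [IsStrictOrderedRing K]
    {a c k : K} (ha : 1 ≤ a) (hk : 0 ≤ k) (hac : a * c ≤ k) : c / a ≤ k := by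
  rw [div_le_iff₀ (by linarith)]
  rcases le_total c 0 with hc | hc
  · nlinarith
  · nlinarith

theorem first_wall_bound_general (a b c : ℤ) (α : ℝ)
    (ha : 1 ≤ a) (hb0 : 0 ≤ b) (hb6 : b ≤ 6)
    (hαsq : α ^ 2 = (c : ℝ) / (16 * (a : ℝ)))
    (h1 : a * c ≤ b ^ 2) (h2 : a * c ≤ (6 - b) ^ 2) :
    α ≤ 3 / 4 := by
  have hac : a * c ≤ 3 ^ 2 := le_sq_of_le_sq_of_le_sq_sub hb0 (by linarith) h1 (by linarith)
  have hca : (c : ℝ) / a ≤ 9 :=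
    div_le_of_one_le_of_mul_le (by exact_mod_cast ha) (by norm_num) (by exact_mod_cast hac)
  have hα2 : α ^ 2 ≤ (3 / 4) ^ 2 := by
    rw [hαsq, mul_comm, ← div_div]
    linarith
  exact (abs_le_of_sq_le_sq' hα2 (by norm_num)).2

/-- If a ≥ 1, 0 ≤ b ≤ 6, c > 0, α > 0 with α² = c/(16a), b² ≥ ac and (6−b)² ≥ ac,
    then α ≤ 3/4. -/
theorem first_wall_bound (a b c : ℤ) (α : ℝ)
    (ha : 1 ≤ a) (hb0 : 0 ≤ b) (hb6 : b ≤ 6) (hc : 0 < c) (hα : 0 < α)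
    (hαsq : α ^ 2 = (c : ℝ) / (16 * (a : ℝ)))
    (h1 : a * c ≤ b ^ 2) (h2 : a * c ≤ (6 - b) ^ 2) :
    α ≤ 3 / 4 :=
  first_wall_bound_general a b c α ha hb0 hb6 hαsq h1 h2
end

section
/- For every real α > 0 and every decomposition (−4, 3, 7/8) = (r₁, c₁, d₁) + (r₂, c₂, d₂) with r₁ = −4a, r₂ = −4 + 4a for an integer a, such that Δ(rᵢ, cᵢ, dᵢ) ≥ 0 for i = 1, 2 and μ_α(r₁,c₁,d₁) = μ_α(r₂,c₂,d₂) with c₁, c₂ > 0: if additionally α > √5/4, then no such decomposition exists with both (rᵢ,cᵢ,dᵢ) in the lattice Λ generated by (4,3,−7/8), (−8,0,7/4), (4,1,1/8), (4,3,9/8), (4,5,25/8). -/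
/-! Lattice membership makes the two factors (−4a, C₁, M₁/8) and (4a − 4, C₂, M₂/8) integral
with Cᵢ ≡ rᵢ/4 (mod 2), their discriminants being C₁² + aM₁ and C₂² + (1 − a)M₂. Clearing
denominators, equal slopes mean C₁M₂ − C₂M₁ = 16α² (aC₂ − (1 − a)C₁), and 16α² > 5.
As C₁ ∈ {1, 2}, a positive bracket forces a ≥ C₁ (by parity) and M₁ ≤ 4C₁ − 1 − 5a, so the
first discriminant is negative. The bracket equals 3a − C₁, so it does not vanish, and a
negative bracket is the same situation with the factors exchanged. -/

/-- Membership in the lattice Λ ⊂ ℚ³ generated by (4,3,−7/8), (−8,0,7/4), (4,1,1/8),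
    (4,3,9/8), (4,5,25/8). -/
def inLambda (x y z : ℚ) : Prop :=
  ∃ a₁ a₂ a₃ a₄ a₅ : ℤ,
    x = 4 * a₁ - 8 * a₂ + 4 * a₃ + 4 * a₄ + 4 * a₅ ∧
    y = 3 * a₁ + 0 * a₂ + 1 * a₃ + 3 * a₄ + 5 * a₅ ∧
    z = -(7 / 8) * a₁ + (7 / 4) * a₂ + (1 / 8) * a₃ + (9 / 8) * a₄ + (25 / 8) * a₅

theorem inLambda.exists_int {x y z : ℚ} (h : inLambda x y z) :
    ∃ X C M : ℤ, x = 4 * X ∧ y = C ∧ z = M / 8 ∧ C ≡ X [ZMOD 2] := by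
  obtain ⟨a₁, a₂, a₃, a₄, a₅, rfl, rfl, rfl⟩ := h
  refine ⟨a₁ - 2 * a₂ + a₃ + a₄ + a₅, 3 * a₁ + a₃ + 3 * a₄ + 5 * a₅,
    -7 * a₁ + 14 * a₂ + a₃ + 9 * a₄ + 25 * a₅,
    by push_cast; ring, by push_cast; ring, by push_cast; ring, ?_⟩
  simp only [Int.ModEq]
  omega

lemma mul_lt_of_cast_eq_mul {b N K : ℤ} {t : ℝ} (hb : (b : ℝ) < t) (h : (N : ℝ) = t * K)
    (hK : 0 < K) : b * K < N := by
  have : (b : ℝ) * K < t * K := mul_lt_mul_of_pos_right hb (by exact_mod_cast hK)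
  exact_mod_cast h ▸ this

lemma slope_eq_slope_iff {α r₁ c₁ d₁ r₂ c₂ d₂ : ℝ} (hc₁ : c₁ ≠ 0) (hc₂ : c₂ ≠ 0) :
    (d₁ - α ^ 2 / 2 * r₁) / c₁ = (d₂ - α ^ 2 / 2 * r₂) / c₂ ↔
      2 * (d₁ * c₂ - d₂ * c₁) = α ^ 2 * (r₁ * c₂ - r₂ * c₁) := by
  rw [div_eq_div_iff hc₁ hc₂]
  exact ⟨fun h => by linear_combination 2 * h, fun h => by linear_combination h / 2⟩

lemma discr_neg_of_wall {a C₁ C₂ M₁ M₂ : ℤ} (hC : C₁ + C₂ = 3) (hM : M₁ + M₂ = 7)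
    (hC₁ : 0 < C₁) (hC₂ : 0 < C₂) (hpar : C₁ ≡ -a [ZMOD 2])
    (hK : 0 < a * C₂ - (1 - a) * C₁) (hN : 5 * (a * C₂ - (1 - a) * C₁) < C₁ * M₂ - C₂ * M₁) :
    C₁ ^ 2 + a * M₁ < 0 := by
  simp only [Int.ModEq] at hpar
  obtain ⟨rfl, rfl⟩ | ⟨rfl, rfl⟩ : C₁ = 1 ∧ C₂ = 2 ∨ C₁ = 2 ∧ C₂ = 1 := by omega
  · have ha : 1 ≤ a := by omega
    have hM₁ : M₁ ≤ 3 - 5 * a := by omega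
    nlinarith
  · have ha : 2 ≤ a := by omega
    have hM₁ : M₁ ≤ 7 - 5 * a := by omega
    nlinarith

lemma no_integral_wall {a C₁ C₂ M₁ M₂ : ℤ} {t : ℝ} (ht : 5 < t) (hC : C₁ + C₂ = 3)
    (hM : M₁ + M₂ = 7) (hC₁ : 0 < C₁) (hC₂ : 0 < C₂)
    (hpar₁ : C₁ ≡ -a [ZMOD 2]) (hpar₂ : C₂ ≡ a - 1 [ZMOD 2])
    (hD₁ : 0 ≤ C₁ ^ 2 + a * M₁) (hD₂ : 0 ≤ C₂ ^ 2 + (1 - a) * M₂)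
    (hwall : ((C₁ * M₂ - C₂ * M₁ : ℤ) : ℝ) = t * (a * C₂ - (1 - a) * C₁ : ℤ)) : False := by
  have ht' : ((5 : ℤ) : ℝ) < t := by exact_mod_cast ht
  rcases lt_trichotomy (a * C₂ - (1 - a) * C₁) 0 with hK | hK | hK
  · -- exchange the two factors, i.e. replace `a` by `1 - a`
    have hK' : 0 < (1 - a) * C₁ - (1 - (1 - a)) * C₂ := by linarith
    have hwall' : ((C₂ * M₁ - C₁ * M₂ : ℤ) : ℝ) = t * ((1 - a) * C₁ - (1 - (1 - a)) * C₂ : ℤ) := by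
      push_cast at hwall ⊢
      linear_combination -hwall
    exact (discr_neg_of_wall (by omega) (by omega) hC₂ hC₁ (by rwa [neg_sub]) hK'
      (mul_lt_of_cast_eq_mul ht' hwall' hK')).not_ge hD₂
  · have : a * C₂ - (1 - a) * C₁ = 3 * a - C₁ := by linear_combination a * hC
    omega
  · exact (discr_neg_of_wall hC hM hC₁ hC₂ hpar₁ hK
      (mul_lt_of_cast_eq_mul ht' hwall hK)).not_ge hD₁

/-- For α > √5/4 there is no decomposition (−4,3,7/8) = (−4a,c₁,d₁) + (−4+4a,c₂,d₂)
    with both discriminants nonnegative, c₁, c₂ > 0, equal slopes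
    μ_α(r,c,d) = (d − (α²/2)r)/c, and both characters in Λ. -/
theorem no_wall_above (α : ℝ) (hα : α > Real.sqrt 5 / 4) :
    ¬ ∃ (a : ℤ) (c₁ c₂ d₁ d₂ : ℚ),
      ((-4 * (a : ℚ)) + (-4 + 4 * (a : ℚ)) = -4 ∧ c₁ + c₂ = 3 ∧ d₁ + d₂ = 7 / 8) ∧
      (c₁ ^ 2 - 2 * (-4 * (a : ℚ)) * d₁ ≥ 0) ∧
      (c₂ ^ 2 - 2 * (-4 + 4 * (a : ℚ)) * d₂ ≥ 0) ∧
      0 < c₁ ∧ 0 < c₂ ∧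
      (((d₁ : ℝ) - α ^ 2 / 2 * (-4 * (a : ℝ))) / (c₁ : ℝ)
        = ((d₂ : ℝ) - α ^ 2 / 2 * (-4 + 4 * (a : ℝ))) / (c₂ : ℝ)) ∧
      inLambda (-4 * (a : ℚ)) c₁ d₁ ∧ inLambda (-4 + 4 * (a : ℚ)) c₂ d₂ := by
  rintro ⟨a, c₁, c₂, d₁, d₂, ⟨-, hc, hd⟩, hΔ₁, hΔ₂, hc₁, hc₂, hμ, hΛ₁, hΛ₂⟩
  obtain ⟨X₁, C₁, M₁, hX₁, rfl, rfl, hpar₁⟩ := hΛ₁.exists_int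
  obtain ⟨X₂, C₂, M₂, hX₂, rfl, rfl, hpar₂⟩ := hΛ₂.exists_int
  obtain rfl : X₁ = -a := by qify; linarith
  obtain rfl : X₂ = a - 1 := by qify; linarith
  have ht : 5 < 16 * α ^ 2 := by
    nlinarith [Real.sq_sqrt (show (0 : ℝ) ≤ 5 by norm_num), Real.sqrt_nonneg 5]
  refine no_integral_wall (M₁ := M₁) (M₂ := M₂) ht (by exact_mod_cast hc) (by qify; linarith) (by exact_mod_cast hc₁)
    (by exact_mod_cast hc₂) hpar₁ hpar₂ (by qify; linarith) (by qify; linarith) ?_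
  have hwall := (slope_eq_slope_iff (by positivity) (by positivity)).1 hμ
  push_cast at hwall ⊢
  linear_combination -4 * hwall
end
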